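/- In a graph G on n ≥ 1 vertices with m ≥ 1 edges, the number of k-subsets S whose induced subgraph has at least β·C(k,2) edges, where β ≥ 16/25, is at most m^(√β·k/2 + 1) · n^((1−√β)k + 2). -/

import Mathlib

/-!
A `β`-covered `k`-set `S` contains a matching of `G` with `M = ⌊√β k / 2⌋` edges, and `S` is
determined by such a matching (at most `C(m, M)` choices) together with the other `k - 2M`
vertices of `S` (at most `C(n, k - 2M)` choices); finally `C(m, M) C(n, k - 2M) ≤ m^M n^(k-2M)`.

The matching comes from the Erdős–Gallai theorem: a graph on `k` vertices without an
`(s+1)`-matching has at most `max (C(2s+1, 2), C(s, 2) + s(k-s))` edges, and both terms are below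
`β C(k, 2)` when `2(s+1) ≤ √β k`. Erdős–Gallai is proved by Gallai's saturation argument: in an
edge-maximal graph without an `(s+1)`-matching, an alternating-path exchange shows that adjacency
is transitive among the non-universal vertices, so these span disjoint cliques, and there are at
most `s` universal vertices.
-/

open Finset

theorem Nat.two_mul_choose_two_add_self : ∀ n : ℕ, 2 * n.choose 2 + n = n * n
  | 0 => rfl
  | n + 1 => by
    have := Nat.two_mul_choose_two_add_self n
    rw [Nat.choose_succ_succ, Nat.choose_one_right]
    nlinarith

theorem Nat.add_choose_two (a b : ℕ) : (a + b).choose 2 = a.choose 2 + a * b + b.choose 2 := by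
  have := Nat.two_mul_choose_two_add_self (a + b)
  have := Nat.two_mul_choose_two_add_self a
  have := Nat.two_mul_choose_two_add_self b
  nlinarith

theorem Nat.choose_two_two_mul_add_one_add_le (a b : ℕ) :
    (2 * a + 1).choose 2 + (2 * b + 1).choose 2 ≤ (2 * (a + b) + 1).choose 2 := by
  have := Nat.two_mul_choose_two_add_self (2 * a + 1)
  have := Nat.two_mul_choose_two_add_self (2 * b + 1)
  have := Nat.two_mul_choose_two_add_self (2 * (a + b) + 1)
  nlinarith

/-- Convexity in `t`: `t` universal vertices joined to a clique on `2(s-t)+1` vertices span the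
most edges at `t = 0` or `t = s`. -/
theorem Nat.choose_two_add_choose_two_le_max {n s t : ℕ} (hts : t ≤ s) (hsn : 2 * s + 2 ≤ n) :
    (2 * (s - t) + 1).choose 2 + n.choose 2 ≤
      max ((2 * s + 1).choose 2) (s.choose 2 + s * (n - s)) + (n - t).choose 2 := by
  obtain ⟨a, rfl⟩ := Nat.exists_eq_add_of_le hts
  obtain ⟨d, rfl⟩ := Nat.exists_eq_add_of_le hsn
  rw [show 2 * (t + a) + 2 + d - t = t + 2 * a + 2 + d by omega,
    show 2 * (t + a) + 2 + d - (t + a) = t + a + 2 + d by omega, Nat.add_sub_cancel_left,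
    show 2 * (t + a) + 2 + d = t + (t + 2 * a + 2 + d) by omega,
    Nat.add_choose_two t (t + 2 * a + 2 + d)]
  have h₁ := Nat.two_mul_choose_two_add_self (2 * a + 1)
  have h₂ := Nat.two_mul_choose_two_add_self t
  have h₃ := Nat.two_mul_choose_two_add_self (2 * (t + a) + 1)
  have h₄ := Nat.two_mul_choose_two_add_self (t + a)
  by_cases hc : 2 * t + 2 * d + 1 ≤ a
  · refine le_trans ?_ (Nat.add_le_add_right (le_max_left _ _) _)
    obtain ⟨e, rfl⟩ := Nat.exists_eq_add_of_le hc
    nlinarith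
  · refine le_trans ?_ (Nat.add_le_add_right (le_max_right _ _) _)
    obtain ⟨f, hf⟩ : ∃ f, 2 * t + 2 * d = a + f := ⟨2 * t + 2 * d - a, by omega⟩
    nlinarith

/- The two Erdős–Gallai terms `C(2s+1, 2)` and `C(s, 2) + s(k-s)`, over `ℝ`. The second bound
needs `c ≥ 4/5`: this is where `β ≥ 16/25` enters. -/
theorem erdosGallai_clique_count_lt {c k s : ℝ} (hc : c ≤ 1) (hs : 0 ≤ s)
    (hsk : 2 * (s + 1) ≤ c * k) :
    (2 * s + 1) * (2 * s + 1 - 1) / 2 < c ^ 2 * (k * (k - 1) / 2) := by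
  nlinarith [mul_le_mul (show 2 * s + 1 ≤ c * k - 1 by linarith)
    (show 2 * s ≤ c * k - 2 by linarith) (by linarith) (by linarith),
    mul_nonneg (sub_nonneg.2 hc) (show 0 ≤ c * k by linarith)]

theorem erdosGallai_star_count_lt {c k s : ℝ} (hc : 4 / 5 ≤ c) (hc1 : c ≤ 1) (hs : 0 ≤ s)
    (hsk : 2 * (s + 1) ≤ c * k) :
    s * (s - 1) / 2 + s * (k - s) < c ^ 2 * (k * (k - 1) / 2) := by
  have hk : 2 ≤ k := by nlinarith
  nlinarith [mul_nonneg (show 0 ≤ c * k / 2 - 1 - s by linarith)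
      (show 0 ≤ 2 * k - (c * k / 2 - 1) - s - 1 by nlinarith),
    mul_nonneg (sub_nonneg.2 hc) (show 0 ≤ c * k ^ 2 by nlinarith),
    mul_nonneg (sub_nonneg.2 hc1) (show 0 ≤ k by linarith)]

namespace SimpleGraph

variable {V : Type*} [DecidableEq V] {G G' : SimpleGraph V}

def IsEdgePair (G : SimpleGraph V) (p : Finset V) : Prop :=
  ∃ a b, G.Adj a b ∧ p = {a, b}

/-- Matchings are recorded by the vertex sets of their edges, so that the set of matched
vertices of `F` is `F.biUnion id`. -/
def IsPairMatching (G : SimpleGraph V) (F : Finset (Finset V)) : Prop :=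
  (∀ p ∈ F, G.IsEdgePair p) ∧ (F : Set (Finset V)).PairwiseDisjoint id

def HasPairMatching (G : SimpleGraph V) (t : ℕ) : Prop :=
  ∃ F, G.IsPairMatching F ∧ F.card = t

open scoped Classical in
noncomputable def edgePairsIn (G : SimpleGraph V) (T : Finset V) : Finset (Finset V) :=
  (T.powersetCard 2).filter G.IsEdgePair

section EdgePair

variable {p : Finset V} {a b v : V}

theorem isEdgePair_pair (h : G.Adj a b) : G.IsEdgePair {a, b} := ⟨a, b, h, rfl⟩

theorem IsEdgePair.card_eq_two (hp : G.IsEdgePair p) : p.card = 2 := by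
  obtain ⟨a, b, hab, rfl⟩ := hp
  exact card_pair hab.ne

theorem IsEdgePair.nonempty (hp : G.IsEdgePair p) : p.Nonempty :=
  card_pos.mp (by rw [hp.card_eq_two]; norm_num)

theorem IsEdgePair.exists_adj_of_mem (hp : G.IsEdgePair p) (hv : v ∈ p) :
    ∃ w, G.Adj v w ∧ p = {v, w} := by
  obtain ⟨a, b, hab, rfl⟩ := hp
  rcases mem_insert.mp hv with rfl | hv
  · exact ⟨b, hab, rfl⟩
  · rw [mem_singleton.mp hv]
    exact ⟨a, hab.symm, pair_comm a b⟩

theorem IsEdgePair.mono (h : G ≤ G') (hp : G.IsEdgePair p) : G'.IsEdgePair p := by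
  obtain ⟨a, b, hab, rfl⟩ := hp
  exact isEdgePair_pair (h hab)

theorem mem_edgePairsIn {T : Finset V} : p ∈ G.edgePairsIn T ↔ G.IsEdgePair p ∧ p ⊆ T := by
  classical
  simp only [edgePairsIn, mem_filter, mem_powersetCard]
  exact ⟨fun h => ⟨h.2, h.1.1⟩, fun h => ⟨⟨h.2, h.1.card_eq_two⟩, h.1⟩⟩

theorem card_edgePairsIn_le (T : Finset V) : (G.edgePairsIn T).card ≤ T.card.choose 2 := by
  classical
  rw [← card_powersetCard]
  exact card_filter_le _ _

theorem edgePairsIn_mono {S T : Finset V} (hG : G ≤ G') (hST : S ⊆ T) :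
    G.edgePairsIn S ⊆ G'.edgePairsIn T := fun p hp => by
  rw [mem_edgePairsIn] at hp ⊢
  exact ⟨hp.1.mono hG, hp.2.trans hST⟩

theorem IsEdgePair.eq_or_of_sup_edge {x y : V}
    (hp : (G ⊔ edge x y).IsEdgePair p) : p = {x, y} ∨ G.IsEdgePair p := by
  obtain ⟨a, b, hab | hab, rfl⟩ := hp
  · exact Or.inr (isEdgePair_pair hab)
  · obtain ⟨⟨rfl, rfl⟩ | ⟨rfl, rfl⟩, -⟩ := (edge_adj _ _ _ _).mp hab
    exacts [Or.inl rfl, Or.inl (pair_comm _ _)]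

theorem card_edgePairsIn_union {C D : Finset V} (hCD : Disjoint C D)
    (hno : ∀ c ∈ C, ∀ d ∈ D, ¬G.Adj c d) :
    (G.edgePairsIn (C ∪ D)).card = (G.edgePairsIn C).card + (G.edgePairsIn D).card := by
  rw [← card_union_of_disjoint]
  · congr 1
    ext p
    simp only [mem_union, mem_edgePairsIn]
    constructor
    · rintro ⟨⟨a, b, hab, rfl⟩, hsub⟩
      simp only [insert_subset_iff, singleton_subset_iff, mem_union] at hsub
      obtain ⟨ha | ha, hb | hb⟩ := hsub
      · exact Or.inl ⟨isEdgePair_pair hab, by simp [insert_subset_iff, ha, hb]⟩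
      · exact absurd hab (hno a ha b hb)
      · exact absurd hab.symm (hno b hb a ha)
      · exact Or.inr ⟨isEdgePair_pair hab, by simp [insert_subset_iff, ha, hb]⟩
    · rintro (⟨hp, hsub⟩ | ⟨hp, hsub⟩)
      · exact ⟨hp, hsub.trans subset_union_left⟩
      · exact ⟨hp, hsub.trans subset_union_right⟩
  · refine Finset.disjoint_left.mpr fun p hpC hpD => ?_
    rw [mem_edgePairsIn] at hpC hpD
    obtain ⟨v, hv⟩ := hpC.1.nonempty
    exact Finset.disjoint_left.mp hCD (hpC.2 hv) (hpD.2 hv)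

theorem card_edgePairsIn_add_choose_two_le {S T : Finset V} (h : S ⊆ T) :
    (G.edgePairsIn T).card + S.card.choose 2 ≤ (G.edgePairsIn S).card + T.card.choose 2 := by
  classical
  have hsub : G.edgePairsIn T \ G.edgePairsIn S ⊆ T.powersetCard 2 \ S.powersetCard 2 := by
    intro p hp
    simp only [mem_sdiff, mem_edgePairsIn, mem_powersetCard, not_and] at hp ⊢
    exact ⟨⟨hp.1.2, hp.1.1.card_eq_two⟩, fun hpS _ => hp.2 hp.1.1 hpS⟩
  have h₁ := card_sdiff_add_card_eq_card (edgePairsIn_mono le_rfl h (G := G))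
  have h₂ := card_le_card hsub
  rw [card_sdiff_of_subset (powersetCard_mono h), card_powersetCard, card_powersetCard] at h₂
  have h₃ := Nat.choose_le_choose 2 (card_le_card h)
  omega

end EdgePair

theorem isPairMatching_empty : G.IsPairMatching ∅ := ⟨by simp, by simp⟩

namespace IsPairMatching

variable {F F' : Finset (Finset V)} {p q : Finset V} {v x y : V}

theorem subset (hF : G.IsPairMatching F) (h : F' ⊆ F) : G.IsPairMatching F' :=
  ⟨fun p hp => hF.1 p (h hp), hF.2.subset (by exact_mod_cast h)⟩

theorem card_biUnion (hF : G.IsPairMatching F) : (F.biUnion id).card = 2 * F.card := by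
  rw [Finset.card_biUnion hF.2, sum_congr rfl fun p hp => show (id p).card = 2 from
    (hF.1 p hp).card_eq_two, sum_const, smul_eq_mul, mul_comm]

theorem eq_of_mem (hF : G.IsPairMatching F) (hp : p ∈ F) (hq : q ∈ F) (hvp : v ∈ p)
    (hvq : v ∈ q) : p = q := by
  by_contra hne
  exact Finset.disjoint_left.mp (hF.2 hp hq hne) hvp hvq

theorem insert_of_disjoint (hF : G.IsPairMatching F) (hp : G.IsEdgePair p)
    (hd : Disjoint p (F.biUnion id)) : G.IsPairMatching (insert p F) := by
  refine ⟨fun q hq => (mem_insert.mp hq).elim (· ▸ hp) (hF.1 q), ?_⟩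
  rw [coe_insert]
  exact hF.2.insert fun q hq _ => hd.mono_right (subset_biUnion_of_mem id hq)

theorem union (hF : G.IsPairMatching F) (hF' : G.IsPairMatching F')
    (hd : Disjoint (F.biUnion id) (F'.biUnion id)) : G.IsPairMatching (F ∪ F') := by
  refine ⟨fun q hq => (mem_union.mp hq).elim (hF.1 q) (hF'.1 q), ?_⟩
  rw [coe_union]
  exact hF.2.union hF'.2 fun p hp q hq _ =>
    (hd.mono_left (subset_biUnion_of_mem id hp)).mono_right (subset_biUnion_of_mem id hq)

theorem card_union (hF : G.IsPairMatching F) (hd : Disjoint (F.biUnion id) (F'.biUnion id)) :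
    (F ∪ F').card = F.card + F'.card := by
  refine card_union_of_disjoint (Finset.disjoint_left.mpr fun p hp hp' => ?_)
  obtain ⟨v, hv⟩ := (hF.1 p hp).nonempty
  exact Finset.disjoint_left.mp hd (mem_biUnion.mpr ⟨p, hp, hv⟩) (mem_biUnion.mpr ⟨p, hp', hv⟩)

theorem insert_pair (hF : G.IsPairMatching F) (hxy : G.Adj x y) (hx : x ∉ F.biUnion id)
    (hy : y ∉ F.biUnion id) :
    G.IsPairMatching (insert {x, y} F) ∧ (insert {x, y} F).card = F.card + 1 ∧
      (insert {x, y} F).biUnion id = insert x (insert y (F.biUnion id)) := by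
  have hd : Disjoint {x, y} (F.biUnion id) := by simp [hx, hy]
  refine ⟨hF.insert_of_disjoint (isEdgePair_pair hxy) hd,
    card_insert_of_notMem fun h => hx (mem_biUnion.mpr ⟨_, h, mem_insert_self x _⟩), ?_⟩
  simp [biUnion_insert, insert_union]

theorem hasPairMatching_card_add_one (hF : G.IsPairMatching F) (hxy : G.Adj x y)
    (hx : x ∉ F.biUnion id) (hy : y ∉ F.biUnion id) : G.HasPairMatching (F.card + 1) :=
  ⟨_, (hF.insert_pair hxy hx hy).1, (hF.insert_pair hxy hx hy).2.1⟩

theorem erase (hF : G.IsPairMatching F) (p : Finset V) : G.IsPairMatching (F.erase p) :=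
  hF.subset (erase_subset p F)

theorem biUnion_erase (hF : G.IsPairMatching F) (hp : p ∈ F) :
    (F.erase p).biUnion id = F.biUnion id \ p := by
  ext u
  simp only [mem_biUnion, mem_erase, mem_sdiff, id]
  constructor
  · rintro ⟨q, ⟨hqp, hq⟩, huq⟩
    exact ⟨⟨q, hq, huq⟩, fun hup => hqp (hF.eq_of_mem hq hp huq hup)⟩
  · rintro ⟨⟨q, hq, huq⟩, hup⟩
    exact ⟨q, ⟨fun h => hup (h ▸ huq), hq⟩, huq⟩

end IsPairMatching

def AugmentsOrShifts (G : SimpleGraph V) (A B : Finset (Finset V)) (v : V) : Prop :=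
  (∃ M, G.IsPairMatching M ∧ M.card = B.card + 1 ∧
    M.biUnion id ⊆ A.biUnion id ∪ B.biUnion id) ∨
  ∃ M w, G.IsPairMatching M ∧ M.card = A.card ∧ w ∈ B.biUnion id \ A.biUnion id ∧
    M.biUnion id ⊆ insert w ((A.biUnion id).erase v)

theorem augmentsOrShifts_of_erase {A B : Finset (Finset V)} (hA : G.IsPairMatching A)
    (hB : G.IsPairMatching B) {v a b : V} (he : {v, a} ∈ A) (hf : {a, b} ∈ B)
    (hva : G.Adj v a) (hab : G.Adj a b) (hbA : b ∈ A.biUnion id) (hvB : v ∉ B.biUnion id)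
    (h : G.AugmentsOrShifts (A.erase {v, a}) (B.erase {a, b}) b) : G.AugmentsOrShifts A B v := by
  have haA : a ∈ A.biUnion id := mem_biUnion.mpr ⟨_, he, by simp⟩
  rw [AugmentsOrShifts, hA.biUnion_erase he, hB.biUnion_erase hf] at h
  rcases h with ⟨M, hM, hMcard, hMsub⟩ | ⟨M, w, hM, hMcard, hw, hMsub⟩
  · obtain ⟨hM', hcard, hsupp⟩ := hM.insert_pair hva (fun h => by simpa [hvB] using hMsub h)
      (fun h => by simpa using hMsub h)
    refine Or.inl ⟨_, hM', by rw [hcard, hMcard, card_erase_add_one hf], ?_⟩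
    rw [hsupp]
    intro u
    have := @hMsub u
    simp only [mem_union, mem_insert, mem_singleton, mem_sdiff] at this ⊢
    grind
  · simp only [mem_sdiff, mem_insert, mem_singleton] at hw
    have hMsub' : ∀ u ∈ M.biUnion id, u = w ∨ u ≠ b ∧ (u ∈ A.biUnion id ∧ u ≠ v ∧ u ≠ a) :=
      fun u hu => by simpa using hMsub hu
    obtain ⟨hM', hcard, hsupp⟩ := hM.insert_pair hab (fun h => by grind) (fun h => by grind)
    refine Or.inr ⟨_, w, hM', by rw [hcard, hMcard, card_erase_add_one he], ?_, ?_⟩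
    · simp only [mem_sdiff]
      grind
    · rw [hsupp]
      intro u
      simp only [mem_insert, mem_erase]
      grind

/-- Following the alternating path that starts at `v` with an edge of `A`: either it ends at
a vertex missed by `B`, and `B` is augmented, or it ends at a vertex `w` missed by `A`,
and shifting `A` along it frees `v` at the cost of `w`. -/
theorem IsPairMatching.augmentsOrShifts {A B : Finset (Finset V)} (hA : G.IsPairMatching A)
    (hB : G.IsPairMatching B) {v : V} (hvA : v ∈ A.biUnion id) (hvB : v ∉ B.biUnion id) :
    G.AugmentsOrShifts A B v := by
  induction B using Finset.strongInduction generalizing A v with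
  | H B ih =>
  obtain ⟨e, he, hve⟩ := mem_biUnion.mp hvA
  obtain ⟨a, hva, rfl⟩ := (hA.1 e he).exists_adj_of_mem hve
  have haA : a ∈ A.biUnion id := mem_biUnion.mpr ⟨_, he, by simp⟩
  have hA' := hA.biUnion_erase he
  by_cases haB : a ∉ B.biUnion id
  · obtain ⟨hM, hcard, hsupp⟩ := hB.insert_pair hva hvB haB
    refine Or.inl ⟨_, hM, hcard, ?_⟩
    rw [hsupp]
    exact insert_subset (mem_union_left _ hvA) (insert_subset (mem_union_left _ haA)
      subset_union_right)
  obtain ⟨f, hf, haf⟩ := mem_biUnion.mp (not_not.mp haB)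
  obtain ⟨b, hab, rfl⟩ := (hB.1 f hf).exists_adj_of_mem haf
  have hbB : b ∈ B.biUnion id := mem_biUnion.mpr ⟨_, hf, by simp⟩
  by_cases hbA : b ∉ A.biUnion id
  · obtain ⟨hM, hcard, hsupp⟩ := (hA.erase {v, a}).insert_pair hab (by simp [hA'])
      (by simp [hA', hbA])
    refine Or.inr ⟨_, b, hM, by rw [hcard, card_erase_add_one he], by simp [hbB, hbA], ?_⟩
    rw [hsupp, hA']
    intro u
    simp only [mem_insert, mem_sdiff, mem_singleton, mem_erase]
    grind
  have hbv : b ≠ v := fun h => hvB (h ▸ hbB)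
  refine augmentsOrShifts_of_erase hA hB he hf hva hab (not_not.mp hbA) hvB <|
    ih _ (erase_ssubset hf) (hA.erase _) (hB.erase _) ?_ ?_
  · simp [hA', not_not.mp hbA, hbv, hab.ne']
  · simp [hB.biUnion_erase hf]

theorem hasPairMatching_succ_of_path {x y z : V} (hxy : G.Adj x y) (hyz : G.Adj y z)
    (hxz : x ≠ z) {M₁ M₂ : Finset (Finset V)} (h₁ : G.IsPairMatching M₁)
    (h₂ : G.IsPairMatching M₂) (hcard : M₂.card = M₁.card) (hx : x ∉ M₁.biUnion id)
    (hz : z ∉ M₁.biUnion id) (hy : y ∉ M₂.biUnion id) : G.HasPairMatching (M₁.card + 1) := by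
  by_cases hy₁ : y ∉ M₁.biUnion id
  · exact h₁.hasPairMatching_card_add_one hxy hx hy₁
  rcases h₁.augmentsOrShifts h₂ (not_not.mp hy₁) hy with ⟨M, hM, hMcard, -⟩ |
    ⟨M, w, hM, hMcard, hw, hMsub⟩
  · exact ⟨M, hM, hMcard.trans (by rw [hcard])⟩
  have hmem : ∀ u, u ∈ M.biUnion id → u = w ∨ (u ≠ y ∧ u ∈ M₁.biUnion id) := fun u hu => by
    simpa using hMsub hu
  have hw₁ : w ∉ M₁.biUnion id := (mem_sdiff.mp hw).2
  have hyM : y ∉ M.biUnion id := fun h => by grind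
  rw [← hMcard]
  by_cases hwx : w = x
  · exact hM.hasPairMatching_card_add_one hyz hyM fun h => by grind
  · exact hM.hasPairMatching_card_add_one hxy (fun h => by grind) hyM

theorem exists_pairMatching_of_isClique {C : Finset V} (hC : G.IsClique (C : Set V)) :
    ∃ F, G.IsPairMatching F ∧ F.biUnion id ⊆ C ∧ F.card = C.card / 2 := by
  induction C using Finset.strongInduction with
  | H C ih =>
  by_cases hsmall : C.card ≤ 1
  · exact ⟨∅, isPairMatching_empty, by simp, by simp; omega⟩
  obtain ⟨a, ha, b, hb, hab⟩ := one_lt_card.mp (not_le.mp hsmall)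
  have hpair : {a, b} ⊆ C := by simp [insert_subset_iff, ha, hb]
  obtain ⟨F, hF, hFC, hFcard⟩ := ih (C \ {a, b}) (sdiff_ssubset hpair (by simp))
    (hC.subset (by simp))
  obtain ⟨hF', hcard, hsupp⟩ := hF.insert_pair (hC ha hb hab) (fun h => by simpa using hFC h)
    (fun h => by simpa using hFC h)
  refine ⟨_, hF', ?_, ?_⟩
  · rw [hsupp]
    exact insert_subset ha (insert_subset hb (hFC.trans sdiff_subset))
  · rw [hcard, hFcard, card_sdiff_of_subset hpair, card_pair hab]
    omega

theorem IsPairMatching.hasPairMatching_add_of_forall_adj [Fintype V] {F : Finset (Finset V)}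
    {U : Finset V} (hF : G.IsPairMatching F) (hU : ∀ u ∈ U, ∀ w, w ≠ u → G.Adj u w)
    (hd : Disjoint U (F.biUnion id)) (hcard : 2 * F.card + 2 * U.card ≤ Fintype.card V) :
    G.HasPairMatching (F.card + U.card) := by
  induction U using Finset.induction_on generalizing F with
  | empty => exact ⟨F, hF, rfl⟩
  | insert u U hu ih =>
  obtain ⟨w, -, hw⟩ := exists_mem_notMem_of_card_lt_card (s := F.biUnion id ∪ insert u U)
    (t := univ) <| by
      have := card_union_le (F.biUnion id) (insert u U)
      rw [hF.card_biUnion, card_insert_of_notMem hu] at this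
      rw [card_insert_of_notMem hu] at hcard
      rw [card_univ]
      omega
  simp only [mem_union, mem_insert, not_or] at hw
  obtain ⟨hF', hcard', hsupp⟩ := hF.insert_pair (hU u (mem_insert_self u U) w hw.2.1)
    (Finset.disjoint_left.mp hd (mem_insert_self u U)) hw.1
  rw [card_insert_of_notMem hu] at hcard ⊢
  have := ih hF' (fun v hv => hU v (mem_insert_of_mem hv)) ?_ (by omega)
  · rwa [hcard', add_right_comm] at this
  · rw [hsupp]
    simpa [hu, hw.2.2] using (disjoint_insert_left.mp hd).2

theorem card_le_sub_card_of_subset_sdiff {T : Finset V} {σ : ℕ}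
    (hσ : ∀ F, G.IsPairMatching F → F.biUnion id ⊆ T → F.card ≤ σ) {F₀ : Finset (Finset V)}
    (hF₀ : G.IsPairMatching F₀) (hF₀T : F₀.biUnion id ⊆ T) {F : Finset (Finset V)}
    (hF : G.IsPairMatching F) (hFT : F.biUnion id ⊆ T \ F₀.biUnion id) :
    F.card ≤ σ - F₀.card := by
  have hd : Disjoint (F₀.biUnion id) (F.biUnion id) := disjoint_of_subset_right hFT disjoint_sdiff
  have := hσ _ (hF₀.union hF hd) <| by
    rw [union_biUnion]
    exact union_subset hF₀T (hFT.trans sdiff_subset)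
  rw [hF₀.card_union hd] at this
  omega

theorem card_edgePairsIn_le_of_transitive {T : Finset V}
    (htr : ∀ x ∈ T, ∀ y ∈ T, ∀ z ∈ T, G.Adj x y → G.Adj y z → x ≠ z → G.Adj x z) {σ : ℕ}
    (hσ : ∀ F, G.IsPairMatching F → F.biUnion id ⊆ T → F.card ≤ σ) :
    (G.edgePairsIn T).card ≤ (2 * σ + 1).choose 2 := by
  induction T using Finset.strongInduction generalizing σ with
  | H T ih =>
  classical
  rcases T.eq_empty_or_nonempty with rfl | ⟨v, hv⟩
  · exact (card_edgePairsIn_le ∅).trans (by simp)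
  set C := T.filter (fun w => w = v ∨ G.Adj v w)
  have hCT : C ⊆ T := filter_subset _ _
  have hvC : v ∈ C := mem_filter.mpr ⟨hv, Or.inl rfl⟩
  have hC : G.IsClique (C : Set V) := by
    intro a ha b hb hab
    simp only [C, mem_coe, mem_filter] at ha hb
    rcases ha with ⟨haT, rfl | hva⟩ <;> rcases hb with ⟨hbT, rfl | hvb⟩
    exacts [absurd rfl hab, hvb, hva.symm, htr a haT v hv b hbT hva.symm hvb hab]
  have hcross : ∀ c ∈ C, ∀ d ∈ T \ C, ¬G.Adj c d := by
    intro c hc d hd hcd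
    simp only [C, mem_sdiff, mem_filter, not_and, not_or] at hc hd
    obtain ⟨hcT, rfl | hvc⟩ := hc
    · exact (hd.2 hd.1).2 hcd
    · exact (hd.2 hd.1).2 (htr v hv c hcT d hd.1 hvc hcd (Ne.symm (hd.2 hd.1).1))
  obtain ⟨FC, hFC, hFCC, hFCcard⟩ := exists_pairMatching_of_isClique hC
  have hle : C.card / 2 ≤ σ := hFCcard ▸ hσ FC hFC (hFCC.trans hCT)
  have hrest := ih (T \ C) (sdiff_ssubset hCT ⟨v, hvC⟩)
    (fun x hx y hy z hz => htr x (sdiff_subset hx) y (sdiff_subset hy) z (sdiff_subset hz))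
    fun F hF hFsub => card_le_sub_card_of_subset_sdiff hσ hFC (hFCC.trans hCT) hF
      (hFsub.trans (sdiff_subset_sdiff subset_rfl hFCC))
  rw [hFCcard] at hrest
  calc (G.edgePairsIn T).card = (G.edgePairsIn C).card + (G.edgePairsIn (T \ C)).card := by
        rw [← card_edgePairsIn_union disjoint_sdiff hcross, union_sdiff_of_subset hCT]
    _ ≤ (2 * (C.card / 2) + 1).choose 2 + (2 * (σ - C.card / 2) + 1).choose 2 :=
        add_le_add ((card_edgePairsIn_le C).trans (Nat.choose_le_choose 2 (by omega))) hrest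
    _ ≤ (2 * σ + 1).choose 2 := by
        have := Nat.choose_two_two_mul_add_one_add_le (C.card / 2) (σ - C.card / 2)
        rwa [Nat.add_sub_cancel' hle] at this

section Saturated

variable {s : ℕ} (hG : Maximal (fun H : SimpleGraph V => ¬H.HasPairMatching (s + 1)) G)
include hG

theorem exists_pairMatching_notMem_of_maximal {x y : V} (hxy : x ≠ y) (hn : ¬G.Adj x y) :
    ∃ F, G.IsPairMatching F ∧ F.card = s ∧ x ∉ F.biUnion id ∧ y ∉ F.biUnion id := by
  have hsat : (G ⊔ edge x y).HasPairMatching (s + 1) := by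
    by_contra h
    exact (lt_sup_edge G x y hxy hn).not_ge (hG.2 h le_sup_left)
  obtain ⟨F, hF, hcard⟩ := hsat
  by_cases hxyF : {x, y} ∈ F
  · refine ⟨F.erase {x, y}, ⟨fun p hp => ?_, (hF.erase _).2⟩, by simp [hxyF, hcard],
      by simp [hF.biUnion_erase hxyF], by simp [hF.biUnion_erase hxyF]⟩
    exact ((hF.1 p (mem_of_mem_erase hp)).eq_or_of_sup_edge).resolve_left (ne_of_mem_erase hp)
  · refine absurd ⟨F, ⟨fun p hp => ?_, hF.2⟩, hcard⟩ hG.1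
    exact ((hF.1 p hp).eq_or_of_sup_edge).resolve_left fun h => hxyF (h ▸ hp)

theorem adj_of_adj_of_adj_of_maximal {x y z w : V} (hxy : G.Adj x y) (hyz : G.Adj y z)
    (hxz : x ≠ z) (hyw : y ≠ w) (hnyw : ¬G.Adj y w) : G.Adj x z := by
  by_contra hn
  obtain ⟨M₁, h₁, hcard₁, hx, hz⟩ := exists_pairMatching_notMem_of_maximal hG hxz hn
  obtain ⟨M₂, h₂, hcard₂, hy, -⟩ := exists_pairMatching_notMem_of_maximal hG hyw hnyw
  exact hG.1 (hcard₁ ▸ hasPairMatching_succ_of_path hxy hyz hxz h₁ h₂ (hcard₂.trans hcard₁.symm)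
    hx hz hy)

theorem card_add_card_le_of_maximal [Fintype V] (hn : 2 * s + 2 ≤ Fintype.card V)
    {F : Finset (Finset V)} {U : Finset V} (hF : G.IsPairMatching F)
    (hU : ∀ u ∈ U, ∀ w, w ≠ u → G.Adj u w) (hd : Disjoint U (F.biUnion id)) :
    F.card + U.card ≤ s := by
  by_contra! hlt
  obtain ⟨U', hU'U, hU'card⟩ := exists_subset_card_eq (min_le_left U.card (s + 1))
  obtain ⟨F', hF'F, hF'card⟩ := exists_subset_card_eq (show s + 1 - U'.card ≤ F.card by omega)
  have := (hF.subset hF'F).hasPairMatching_add_of_forall_adj (fun u hu => hU u (hU'U hu))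
    ((hd.mono_left hU'U).mono_right (biUnion_subset_biUnion_of_subset_left id hF'F)) (by omega)
  exact hG.1 (by rwa [hF'card, Nat.sub_add_cancel (by omega)] at this)

/-- The non-universal vertices span disjoint cliques, and there are at most `s` universal
vertices. -/
theorem card_edgePairsIn_univ_le_of_maximal [Fintype V] :
    (G.edgePairsIn univ).card ≤
      max ((2 * s + 1).choose 2) (s.choose 2 + s * (Fintype.card V - s)) := by
  classical
  by_cases hsmall : Fintype.card V ≤ 2 * s + 1
  · exact le_max_of_le_left ((card_edgePairsIn_le univ).trans (Nat.choose_le_choose 2 hsmall))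
  set U := univ.filter fun u => ∀ w, w ≠ u → G.Adj u w
  have hU : ∀ u ∈ U, ∀ w, w ≠ u → G.Adj u w := fun u hu => (mem_filter.mp hu).2
  have hts : U.card ≤ s := by
    simpa using card_add_card_le_of_maximal hG (by omega) isPairMatching_empty hU (by simp)
  have htr : ∀ x ∈ univ \ U, ∀ y ∈ univ \ U, ∀ z ∈ univ \ U,
      G.Adj x y → G.Adj y z → x ≠ z → G.Adj x z := by
    intro x _ y hy z _ hxy hyz hxz
    obtain ⟨w, hwy, hnyw⟩ : ∃ w, w ≠ y ∧ ¬G.Adj y w := by simpa [U] using hy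
    exact adj_of_adj_of_adj_of_maximal hG hxy hyz hxz (Ne.symm hwy) hnyw
  have hW := card_edgePairsIn_le_of_transitive htr (σ := s - U.card) fun F hF hFW => by
    have := card_add_card_le_of_maximal hG (by omega) hF hU
      (disjoint_of_subset_right hFW disjoint_sdiff)
    omega
  have hcount := card_edgePairsIn_add_choose_two_le (G := G) (subset_univ (univ \ U))
  rw [card_univ_sdiff, card_univ] at hcount
  have := Nat.choose_two_add_choose_two_le_max (n := Fintype.card V) hts (by omega)
  omega

end Saturated

theorem card_edgePairsIn_univ_le_of_not_hasPairMatching [Fintype V] {s : ℕ}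
    (h : ¬G.HasPairMatching (s + 1)) :
    (G.edgePairsIn univ).card ≤
      max ((2 * s + 1).choose 2) (s.choose 2 + s * (Fintype.card V - s)) := by
  obtain ⟨H, hGH, hH⟩ :=
    Finite.exists_le_maximal (p := fun H : SimpleGraph V => ¬H.HasPairMatching (s + 1)) h
  exact (card_le_card (edgePairsIn_mono hGH subset_rfl)).trans
    (card_edgePairsIn_univ_le_of_maximal hH)

theorem hasPairMatching_of_dense [Fintype V] {c : ℝ} (hc : 4 / 5 ≤ c) (hc1 : c ≤ 1) {M : ℕ}
    (hM : 2 * (M : ℝ) ≤ c * Fintype.card V)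
    (hdense : c ^ 2 * (Fintype.card V).choose 2 ≤ (G.edgePairsIn univ).card) :
    G.HasPairMatching M := by
  obtain _ | s := M
  · exact ⟨∅, isPairMatching_empty, rfl⟩
  by_contra h
  have hEG := card_edgePairsIn_univ_le_of_not_hasPairMatching h
  set k := Fintype.card V
  have hs : 2 * ((s : ℝ) + 1) ≤ c * k := by exact_mod_cast hM
  have hsk : s ≤ k := by
    have : (s : ℝ) ≤ k := by nlinarith
    exact_mod_cast this
  have h₁ : ((2 * s + 1).choose 2 : ℝ) < c ^ 2 * k.choose 2 := by
    rw [Nat.cast_choose_two, Nat.cast_choose_two]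
    push_cast
    exact erdosGallai_clique_count_lt hc1 s.cast_nonneg hs
  have h₂ : ((s.choose 2 + s * (k - s) : ℕ) : ℝ) < c ^ 2 * k.choose 2 := by
    push_cast [Nat.cast_sub hsk, Nat.cast_choose_two]
    exact erdosGallai_star_count_lt hc hc1 s.cast_nonneg hs
  have hmax := max_lt h₁ h₂
  rw [← Nat.cast_max] at hmax
  linarith [(Nat.cast_le (α := ℝ)).mpr hEG]

theorem ncard_edgeSet_eq_card_edgePairsIn_univ [Fintype V] :
    G.edgeSet.ncard = (G.edgePairsIn univ).card := by
  have hinj : Set.InjOn Sym2.toFinset G.edgeSet := fun e _ e' _ h =>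
    Sym2.ext fun x => by rw [← Sym2.mem_toFinset, h, Sym2.mem_toFinset]
  have himg : Sym2.toFinset '' G.edgeSet = G.edgePairsIn univ := by
    ext p
    simp only [Set.mem_image, mem_coe, mem_edgePairsIn, subset_univ, and_true]
    constructor
    · rintro ⟨e, he, rfl⟩
      induction e using Sym2.ind with
      | h a b => rw [Sym2.toFinset_mk_eq]; exact isEdgePair_pair he
    · rintro ⟨a, b, hab, rfl⟩
      exact ⟨s(a, b), hab, Sym2.toFinset_mk_eq⟩
  rw [← hinj.ncard_image, himg, Set.ncard_coe_finset]

theorem IsPairMatching.map {W : Type*} [DecidableEq W] {H : SimpleGraph W} (f : H ↪g G)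
    {F : Finset (Finset W)} (hF : H.IsPairMatching F) :
    G.IsPairMatching (F.map (mapEmbedding f.toEmbedding).toEmbedding) := by
  refine ⟨fun p hp => ?_, fun p hp q hq hpq => ?_⟩
  · obtain ⟨p, hp', rfl⟩ := mem_map.mp hp
    obtain ⟨a, b, hab, rfl⟩ := hF.1 p hp'
    refine ⟨f a, f b, f.map_adj_iff.mpr hab, ?_⟩
    simp [map_insert]
  · simp only [coe_map, Set.mem_image, mem_coe] at hp hq
    obtain ⟨p, hp, rfl⟩ := hp
    obtain ⟨q, hq, rfl⟩ := hq
    exact (disjoint_map f.toEmbedding).mpr (hF.2 hp hq (by rintro rfl; exact hpq rfl))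

theorem biUnion_map_mapEmbedding {W : Type*} [DecidableEq W] (f : W ↪ V)
    (F : Finset (Finset W)) :
    (F.map (mapEmbedding f).toEmbedding).biUnion id = (F.biUnion id).map f := by
  ext v
  simp only [mem_biUnion, mem_map, id]
  constructor
  · rintro ⟨_, ⟨p, hp, rfl⟩, hv⟩
    obtain ⟨x, hx, rfl⟩ := mem_map.mp hv
    exact ⟨x, ⟨p, hp, hx⟩, rfl⟩
  · rintro ⟨x, ⟨p, hp, hx⟩, rfl⟩
    exact ⟨_, ⟨p, hp, rfl⟩, mem_map_of_mem _ hx⟩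

theorem HasPairMatching.exists_of_induce {S : Finset V} {M : ℕ}
    (h : (G.induce (S : Set V)).HasPairMatching M) :
    ∃ F, G.IsPairMatching F ∧ F.card = M ∧ F.biUnion id ⊆ S := by
  obtain ⟨F, hF, rfl⟩ := h
  refine ⟨_, hF.map (Embedding.induce _), card_map _, ?_⟩
  rw [biUnion_map_mapEmbedding]
  intro v hv
  obtain ⟨x, -, rfl⟩ := mem_map.mp hv
  exact x.2

theorem exists_pairMatching_of_dense_induce {c : ℝ} (hc : 4 / 5 ≤ c) (hc1 : c ≤ 1)
    {S : Finset V} {M : ℕ} (hM : 2 * (M : ℝ) ≤ c * S.card)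
    (hS : c ^ 2 * S.card.choose 2 ≤ (G.induce (S : Set V)).edgeSet.ncard) :
    ∃ F, G.IsPairMatching F ∧ F.card = M ∧ F.biUnion id ⊆ S := by
  have hcard : Fintype.card (S : Set V) = S.card := by simp
  refine HasPairMatching.exists_of_induce (hasPairMatching_of_dense hc hc1 ?_ ?_)
  · rwa [hcard]
  · rwa [hcard, ← ncard_edgeSet_eq_card_edgePairsIn_univ]

theorem ncard_le_choose_mul_choose [Fintype V] {𝒮 : Set (Finset V)} {k M : ℕ}
    (h : ∀ S ∈ 𝒮, S.card = k ∧ ∃ F, G.IsPairMatching F ∧ F.card = M ∧ F.biUnion id ⊆ S) :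
    𝒮.ncard ≤ (G.edgePairsIn univ).card.choose M * (Fintype.card V).choose (k - 2 * M) := by
  choose! F hF using fun S hS => (h S hS).2
  have hmaps : ∀ S ∈ 𝒮, (F S, S \ (F S).biUnion id) ∈
      (((G.edgePairsIn univ).powersetCard M ×ˢ (univ : Finset V).powersetCard (k - 2 * M) :
        Finset _) : Set (Finset (Finset V) × Finset V)) := by
    intro S hS
    obtain ⟨hFm, hFcard, hFS⟩ := hF S hS
    simp only [mem_coe, mem_product, mem_powersetCard]
    refine ⟨⟨fun p hp => mem_edgePairsIn.mpr ⟨hFm.1 p hp, subset_univ p⟩, hFcard⟩,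
      subset_univ _, ?_⟩
    rw [card_sdiff_of_subset hFS, hFm.card_biUnion, hFcard, (h S hS).1]
  have hinj : Set.InjOn (fun S => (F S, S \ (F S).biUnion id)) 𝒮 := fun S hS T hT heq => by
    obtain ⟨hFeq, hdiff⟩ := Prod.mk.inj heq
    rw [← union_sdiff_of_subset (hF S hS).2.2, ← union_sdiff_of_subset (hF T hT).2.2, hdiff,
      hFeq]
  have := Set.ncard_le_ncard_of_injOn _ hmaps hinj
  rwa [Set.ncard_coe_finset, card_product, card_powersetCard, card_powersetCard, card_univ]
    at this

end SimpleGraph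

open SimpleGraph in
theorem count_beta_covered_large_general {V : Type} [Fintype V] (n m k : ℕ) (β : ℝ)
    (hβ0 : 16 / 25 ≤ β) (hβ1 : β ≤ 1) (hm : 1 ≤ m) (hn : 1 ≤ n)
    (G : SimpleGraph V) (hcard : Fintype.card V = n) (hedges : G.edgeSet.ncard = m) :
    (({S : Finset V | S.card = k ∧
          β * (k.choose 2 : ℕ) ≤ ((G.induce (S : Set V)).edgeSet.ncard : ℝ)}.ncard : ℕ) : ℝ)
      ≤ (m : ℝ) ^ (Real.sqrt β * k / 2 + 1)
          * (n : ℝ) ^ ((1 - Real.sqrt β) * k + 2) := by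
  classical
  have hc : 4 / 5 ≤ √β := (Real.le_sqrt (by norm_num) (by linarith)).mpr (by linarith)
  have hc1 : √β ≤ 1 := Real.sqrt_le_one.mpr hβ1
  set M := ⌊√β * k / 2⌋₊
  have hM : (M : ℝ) ≤ √β * k / 2 := Nat.floor_le (by positivity)
  have hM' : √β * k / 2 < M + 1 := Nat.lt_floor_add_one _
  have h2M : 2 * M ≤ k := by
    have : (2 * M : ℝ) ≤ k := by nlinarith
    exact_mod_cast this
  refine (Nat.cast_le.mpr (ncard_le_choose_mul_choose (G := G) (k := k) (M := M) ?_)).trans ?_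
  · rintro S ⟨hSk, hSβ⟩
    exact ⟨hSk, exists_pairMatching_of_dense_induce hc hc1 (by rw [hSk]; linarith)
      (by rwa [hSk, Real.sq_sqrt (by linarith)])⟩
  rw [← ncard_edgeSet_eq_card_edgePairsIn_univ, hedges, hcard]
  calc ((m.choose M * n.choose (k - 2 * M) : ℕ) : ℝ)
    _ ≤ (m : ℝ) ^ M * (n : ℝ) ^ (k - 2 * M) := by
      exact_mod_cast Nat.mul_le_mul (Nat.choose_le_pow m M) (Nat.choose_le_pow n _)
    _ ≤ _ := by
      rw [← Real.rpow_natCast, ← Real.rpow_natCast]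
      gcongr
      · exact_mod_cast hm
      · linarith
      · exact_mod_cast hn
      · push_cast [Nat.cast_sub h2M]
        linarith

/-- For a graph `G` on `n ≥ 1` vertices with `m ≥ 1` edges and `β ≥ 16/25`, the number
of `k`-subsets `S` whose induced subgraph has at least `β * C(k,2)` edges is at most
`m ^ (√β * k / 2 + 1) * n ^ ((1 - √β)k + 2)`. -/
theorem count_beta_covered_large {V : Type} [Fintype V] (n m k : ℕ) (β : ℝ)
    (hβ0 : 16 / 25 ≤ β) (hβ1 : β ≤ 1) (hm : 1 ≤ m) (hn : 1 ≤ n) (hk : 1 ≤ k)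
    (G : SimpleGraph V) (hcard : Fintype.card V = n) (hedges : G.edgeSet.ncard = m) :
    (({S : Finset V | S.card = k ∧
          β * (k.choose 2 : ℕ) ≤ ((G.induce (S : Set V)).edgeSet.ncard : ℝ)}.ncard : ℕ) : ℝ)
      ≤ (m : ℝ) ^ (Real.sqrt β * k / 2 + 1)
          * (n : ℝ) ^ ((1 - Real.sqrt β) * k + 2) :=
  count_beta_covered_large_general n m k β hβ0 hβ1 hm hn G hcard hedges
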